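/- Separation of operator norm and cb-norm: for T = (ν/(ν+1)) S + (1/(ν+1)) Θ on B(ℂ^ν), with S the completely depolarizing channel and Θ the transpose map, one has ‖T − S‖ ≤ 2/(ν+1) while ‖T − S‖_cb ≥ (ν−1)/(ν+1). In particular ‖T − S‖ → 0 but ‖T − S‖_cb ≥ 1 − 2/(ν+1) stays bounded away from 0 as ν → ∞. -/

import Mathlib

open scoped Kronecker Matrix.Norms.L2Operator ComplexOrder
open Matrix Classical

namespace QI

/-- Total matrix square root: the positive square root for positive semidefinite
matrices, junk value `0` otherwise. -/
noncomputable def msqrt {n : Type*} [Fintype n] [DecidableEq n] (A : Matrix n n ℂ) :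
    Matrix n n ℂ :=
  if h : A.PosSemidef then
    (h.1.eigenvectorUnitary : Matrix n n ℂ) * diagonal (((↑) : ℝ → ℂ) ∘ Real.sqrt ∘ h.1.eigenvalues) *
      (star h.1.eigenvectorUnitary : Matrix n n ℂ)
  else 0

/-- Trace norm `‖X‖₁ = tr √(Xᴴ X)`. -/
noncomputable def traceNorm {n : Type*} [Fintype n] [DecidableEq n] (X : Matrix n n ℂ) : ℝ :=
  (msqrt (Xᴴ * X)).trace.re

/-- Fidelity `f(ρ,σ) = tr √(√ρ σ √ρ)`. -/
noncomputable def fid {n : Type*} [Fintype n] [DecidableEq n] (ρ σ : Matrix n n ℂ) : ℝ :=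
  (msqrt (msqrt ρ * σ * msqrt ρ)).trace.re

/-- Amplification `id_k ⊗ Φ` of a map between matrix algebras. -/
noncomputable def amp {nB nA : ℕ} (k : ℕ)
    (Φ : Matrix (Fin nB) (Fin nB) ℂ →ₗ[ℂ] Matrix (Fin nA) (Fin nA) ℂ) :
    Matrix (Fin k × Fin nB) (Fin k × Fin nB) ℂ →ₗ[ℂ]
      Matrix (Fin k × Fin nA) (Fin k × Fin nA) ℂ where
  toFun X := Matrix.of fun p q => Φ (Matrix.of fun a b => X (p.1, a) (q.1, b)) p.2 q.2
  map_add' X Y := by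
    ext p q
    have h : (Matrix.of fun a b => (X + Y) (p.1, a) (q.1, b))
        = (Matrix.of fun a b => X (p.1, a) (q.1, b))
          + Matrix.of fun a b => Y (p.1, a) (q.1, b) := by
      ext a b; simp
    show Φ (Matrix.of fun a b => (X + Y) (p.1, a) (q.1, b)) p.2 q.2
      = Φ (Matrix.of fun a b => X (p.1, a) (q.1, b)) p.2 q.2
        + Φ (Matrix.of fun a b => Y (p.1, a) (q.1, b)) p.2 q.2
    rw [h, map_add]; rfl
  map_smul' c X := by
    ext p q
    have h : (Matrix.of fun a b => (c • X) (p.1, a) (q.1, b))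
        = c • Matrix.of fun a b => X (p.1, a) (q.1, b) := by
      ext a b; simp
    show Φ (Matrix.of fun a b => (c • X) (p.1, a) (q.1, b)) p.2 q.2
      = (c • Φ (Matrix.of fun a b => X (p.1, a) (q.1, b))) p.2 q.2
    rw [h, _root_.map_smul]

/-- Operator norm of a linear map between matrix spaces, each equipped with the
ℓ²-operator norm. -/
noncomputable def opNorm {m n : Type*} [Fintype m] [Fintype n] [DecidableEq m] [DecidableEq n]
    (Φ : Matrix m m ℂ →ₗ[ℂ] Matrix n n ℂ) : ℝ :=
  ‖LinearMap.toContinuousLinearMap Φ‖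

/-- The norm of complete boundedness `‖Φ‖_cb = sup_k ‖id_k ⊗ Φ‖`. -/
noncomputable def cbNorm {nB nA : ℕ}
    (Φ : Matrix (Fin nB) (Fin nB) ℂ →ₗ[ℂ] Matrix (Fin nA) (Fin nA) ℂ) : ℝ :=
  ⨆ k : ℕ, opNorm (amp k Φ)

/-- Complete positivity. -/
def IsCP {nB nA : ℕ}
    (Φ : Matrix (Fin nB) (Fin nB) ℂ →ₗ[ℂ] Matrix (Fin nA) (Fin nA) ℂ) : Prop :=
  ∀ (k : ℕ) (X : Matrix (Fin k × Fin nB) (Fin k × Fin nB) ℂ),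
    X.PosSemidef → (amp k Φ X).PosSemidef

/-- The (Heisenberg picture) channel `T(b) = Vᴴ (b ⊗ 1_E) V` defined by a Stinespring
operator `V : H_A → H_B ⊗ H_E`. -/
noncomputable def stine {nA nB nE : ℕ} (V : Matrix (Fin nB × Fin nE) (Fin nA) ℂ) :
    Matrix (Fin nB) (Fin nB) ℂ →ₗ[ℂ] Matrix (Fin nA) (Fin nA) ℂ where
  toFun b := Vᴴ * (b ⊗ₖ (1 : Matrix (Fin nE) (Fin nE) ℂ)) * V
  map_add' b c := by simp [Matrix.add_kronecker, Matrix.add_mul, Matrix.mul_add]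
  map_smul' c b := by simp [Matrix.smul_kronecker, Matrix.smul_mul, Matrix.mul_smul]

/-- The complementary channel `T_E(e) = Vᴴ (1_B ⊗ e) V`. -/
noncomputable def stineC {nA nB nE : ℕ} (V : Matrix (Fin nB × Fin nE) (Fin nA) ℂ) :
    Matrix (Fin nE) (Fin nE) ℂ →ₗ[ℂ] Matrix (Fin nA) (Fin nA) ℂ where
  toFun e := Vᴴ * ((1 : Matrix (Fin nB) (Fin nB) ℂ) ⊗ₖ e) * V
  map_add' b c := by simp [Matrix.kronecker_add, Matrix.add_mul, Matrix.mul_add]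
  map_smul' c b := by simp [Matrix.kronecker_smul, Matrix.smul_mul, Matrix.mul_smul]

/-- The Schrödinger (trace-duality) adjoint `Φ_*`, determined by
`tr (Φ_*(ρ) b) = tr (ρ Φ(b))`. -/
noncomputable def dualMap {nB nA : ℕ}
    (Φ : Matrix (Fin nB) (Fin nB) ℂ →ₗ[ℂ] Matrix (Fin nA) (Fin nA) ℂ) :
    Matrix (Fin nA) (Fin nA) ℂ →ₗ[ℂ] Matrix (Fin nB) (Fin nB) ℂ where
  toFun ρ := Matrix.of fun i j => (ρ * Φ (Matrix.single j i 1)).trace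
  map_add' ρ τ := by ext i j; simp [Matrix.add_mul]
  map_smul' c ρ := by ext i j; simp [Matrix.smul_mul]

/-- Outer product `|ψ⟩⟨ψ|`. -/
def outer {n : Type*} (ψ : n → ℂ) : Matrix n n ℂ :=
  Matrix.vecMulVec ψ (star ψ)

/-- Partial trace over the second tensor factor. -/
noncomputable def ptrace2 {a e : Type*} [Fintype e] (M : Matrix (a × e) (a × e) ℂ) : Matrix a a ℂ :=
  Matrix.of fun i j => ∑ k, M (i, k) (j, k)

/-- Partial trace over the first tensor factor. -/
noncomputable def ptrace1 {a e : Type*} [Fintype a] (M : Matrix (a × e) (a × e) ℂ) : Matrix e e ℂ :=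
  Matrix.of fun i j => ∑ k, M (k, i) (k, j)

/-- The Schrödinger picture channel `T_*(ρ) = tr_E (V ρ Vᴴ)`. -/
noncomputable def schrod {nA nB nE : ℕ} (V : Matrix (Fin nB × Fin nE) (Fin nA) ℂ) :
    Matrix (Fin nA) (Fin nA) ℂ →ₗ[ℂ] Matrix (Fin nB) (Fin nB) ℂ where
  toFun ρ := ptrace2 (V * ρ * Vᴴ)
  map_add' ρ τ := by
    ext i j
    simp [ptrace2, Matrix.add_mul, Matrix.mul_add, Finset.sum_add_distrib]
  map_smul' c ρ := by
    ext i j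
    simp [ptrace2, Matrix.smul_mul, Matrix.mul_smul, Finset.mul_sum]

/-- Completely depolarizing channel `S(e) = tr(σ e) 1_A` (Heisenberg picture). -/
noncomputable def depol {nE nA : ℕ} (σ : Matrix (Fin nE) (Fin nE) ℂ) :
    Matrix (Fin nE) (Fin nE) ℂ →ₗ[ℂ] Matrix (Fin nA) (Fin nA) ℂ where
  toFun e := (σ * e).trace • 1
  map_add' e f := by simp [Matrix.mul_add, add_smul]
  map_smul' c e := by simp [Matrix.mul_smul, smul_smul]

/-- The transpose map `Θ(e) = eᵀ`. -/
def transposeMap (ν : ℕ) : Matrix (Fin ν) (Fin ν) ℂ →ₗ[ℂ] Matrix (Fin ν) (Fin ν) ℂ where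
  toFun e := eᵀ
  map_add' := by intros; simp
  map_smul' := by intros; simp

/-- The maximally depolarizing channel `S(e) = (1/ν) tr(e) 1`. -/
noncomputable def depolS (ν : ℕ) :
    Matrix (Fin ν) (Fin ν) ℂ →ₗ[ℂ] Matrix (Fin ν) (Fin ν) ℂ :=
  depol ((ν : ℂ)⁻¹ • (1 : Matrix (Fin ν) (Fin ν) ℂ))

/-- `T_p = (1-p) S + p Θ`. -/
noncomputable def Tp (ν : ℕ) (p : ℝ) :
    Matrix (Fin ν) (Fin ν) ℂ →ₗ[ℂ] Matrix (Fin ν) (Fin ν) ℂ :=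
  (((1 - p : ℝ) : ℂ)) • depolS ν + ((p : ℝ) : ℂ) • transposeMap ν

/-- The flip (swap) operator `F = Σ_{i,j} |i,j⟩⟨j,i|`. -/
def flipOp (ν : ℕ) : Matrix (Fin ν × Fin ν) (Fin ν × Fin ν) ℂ :=
  Matrix.of fun p q => if p.1 = q.2 ∧ p.2 = q.1 then 1 else 0

/-- Amplification on the right factor: `Φ ⊗ id_k`. -/
noncomputable def ampL {nB nA : ℕ} (k : ℕ)
    (Φ : Matrix (Fin nB) (Fin nB) ℂ →ₗ[ℂ] Matrix (Fin nA) (Fin nA) ℂ) :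
    Matrix (Fin nB × Fin k) (Fin nB × Fin k) ℂ →ₗ[ℂ]
      Matrix (Fin nA × Fin k) (Fin nA × Fin k) ℂ where
  toFun X := Matrix.of fun p q => Φ (Matrix.of fun a b => X (a, p.2) (b, q.2)) p.1 q.1
  map_add' X Y := by
    ext p q
    have h : (Matrix.of fun a b => (X + Y) (a, p.2) (b, q.2))
        = (Matrix.of fun a b => X (a, p.2) (b, q.2))
          + Matrix.of fun a b => Y (a, p.2) (b, q.2) := by
      ext a b; simp
    show Φ (Matrix.of fun a b => (X + Y) (a, p.2) (b, q.2)) p.1 q.1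
      = Φ (Matrix.of fun a b => X (a, p.2) (b, q.2)) p.1 q.1
        + Φ (Matrix.of fun a b => Y (a, p.2) (b, q.2)) p.1 q.1
    rw [h, map_add]; rfl
  map_smul' c X := by
    ext p q
    have h : (Matrix.of fun a b => (c • X) (a, p.2) (b, q.2))
        = c • Matrix.of fun a b => X (a, p.2) (b, q.2) := by
      ext a b; simp
    show Φ (Matrix.of fun a b => (c • X) (a, p.2) (b, q.2)) p.1 q.1
      = (c • Φ (Matrix.of fun a b => X (a, p.2) (b, q.2))) p.1 q.1
    rw [h, _root_.map_smul]

/-- Operational fidelity of two channels. -/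
noncomputable def opFid {nA nB : ℕ}
    (T₁ T₂ : Matrix (Fin nB) (Fin nB) ℂ →ₗ[ℂ] Matrix (Fin nA) (Fin nA) ℂ) : ℝ :=
  ⨅ ψ : {ψ : Fin nA × Fin nA → ℂ // ∑ x, ‖ψ x‖ ^ 2 = 1},
    fid (amp nA (dualMap T₁) (outer ψ.1)) (amp nA (dualMap T₂) (outer ψ.1))

/-- Minimality of a Stinespring representation. -/
def Minimal {nA nB nE : ℕ} (V : Matrix (Fin nB × Fin nE) (Fin nA) ℂ) : Prop :=
  Submodule.span ℂ {x : Fin nB × Fin nE → ℂ |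
    ∃ (b : Matrix (Fin nB) (Fin nB) ℂ) (φ : Fin nA → ℂ),
      x = (b ⊗ₖ (1 : Matrix (Fin nE) (Fin nE) ℂ)).mulVec (V.mulVec φ)} = ⊤

/-
Write `T - S = c (Θ - S)` with `c = 1/(ν+1)`; since `‖Θ‖ ≤ 1` and `‖S‖ ≤ 1`, `‖T - S‖ ≤ 2c`.
For the cb-norm, amplify by `id_ν` and test on the flip `F`, a permutation matrix:
`(id ⊗ Θ)(F) = |Ω⟩⟨Ω|` and `(id ⊗ S)(F) = ν⁻¹ 1` for `Ω = Σᵢ eᵢ ⊗ eᵢ`, so `Ω` is an eigenvector of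
`(id ⊗ (T - S))(F)` with eigenvalue `c (ν - ν⁻¹) = (ν - 1)/ν`.
The supremum defining `cbNorm` would be junk (`0`) if it were unbounded; it is bounded because
every linear map of matrices has the form `X ↦ Σₗ Aₗ X Bₗ`, and `‖1 ⊗ A‖ ≤ ‖A‖` then bounds every
amplification by `Σₗ ‖Aₗ‖ ‖Bₗ‖`.
-/

section L2OpNorm

variable {𝕜 : Type*} [RCLike 𝕜] {ι m n : Type*} [Fintype ι] [Fintype m] [Fintype n]

theorem l2_opNorm_le_of_mulVec (A : Matrix m n 𝕜) {C : ℝ} (hC : 0 ≤ C)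
    (h : ∀ x : n → 𝕜, ‖WithLp.toLp 2 (A *ᵥ x)‖ ≤ C * ‖WithLp.toLp 2 x‖) : ‖A‖ ≤ C :=
  ContinuousLinearMap.opNorm_le_bound _ hC fun x => h x.ofLp

theorem norm_toLp_star (x : n → 𝕜) : ‖WithLp.toLp 2 (star x)‖ = ‖WithLp.toLp 2 x‖ := by
  simp [EuclideanSpace.norm_eq]

theorem norm_entry_le_l2_opNorm [DecidableEq n] (A : Matrix m n 𝕜) (i : m) (j : n) :
    ‖A i j‖ ≤ ‖A‖ := by
  have h := A.l2_opNorm_mulVec (EuclideanSpace.single j 1)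
  rw [PiLp.norm_single, norm_one, mul_one] at h
  calc ‖A i j‖ = ‖(WithLp.toLp 2 (A *ᵥ Pi.single j 1)) i‖ := by simp [mulVec_single]
    _ ≤ _ := PiLp.norm_apply_le _ i
    _ ≤ ‖A‖ := h

theorem norm_trace_le_card_mul_l2_opNorm [DecidableEq n] (A : Matrix n n 𝕜) :
    ‖A.trace‖ ≤ Fintype.card n * ‖A‖ :=
  calc ‖A.trace‖ ≤ ∑ i, ‖A i i‖ := norm_sum_le _ _
    _ ≤ ∑ _i : n, ‖A‖ := Finset.sum_le_sum fun i _ => norm_entry_le_l2_opNorm A i i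
    _ = Fintype.card n * ‖A‖ := by simp

theorem l2_opNorm_one_le [DecidableEq n] : ‖(1 : Matrix n n 𝕜)‖ ≤ 1 := by
  simpa using permMatrix_l2_opNorm_le (𝕜 := 𝕜) (Equiv.refl n)

theorem l2_opNorm_transpose_le [DecidableEq m] (A : Matrix m n 𝕜) : ‖Aᵀ‖ ≤ ‖A‖ := by
  refine l2_opNorm_le_of_mulVec _ (norm_nonneg A) fun x => ?_
  have hconj : Aᵀ *ᵥ x = star (Aᴴ *ᵥ star x) := by
    rw [mulVec_transpose, ← star_vecMul, star_star]
  calc ‖WithLp.toLp 2 (Aᵀ *ᵥ x)‖ = ‖WithLp.toLp 2 (Aᴴ *ᵥ star x)‖ := by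
        rw [hconj, norm_toLp_star]
    _ ≤ ‖Aᴴ‖ * ‖WithLp.toLp 2 (star x)‖ := Aᴴ.l2_opNorm_mulVec _
    _ = ‖A‖ * ‖WithLp.toLp 2 x‖ := by rw [l2_opNorm_conjTranspose, norm_toLp_star]

theorem l2_opNorm_one_kronecker_le [DecidableEq ι] (A : Matrix m n 𝕜) :
    ‖(1 : Matrix ι ι 𝕜) ⊗ₖ A‖ ≤ ‖A‖ := by
  refine l2_opNorm_le_of_mulVec _ (norm_nonneg A) fun x => ?_
  set block : ι → n → 𝕜 := fun i b => x (i, b)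
  have hblock : ∀ i a, ((1 : Matrix ι ι 𝕜) ⊗ₖ A *ᵥ x) (i, a) = (A *ᵥ block i) a := by
    intro i a
    simp [block, mulVec, dotProduct, Fintype.sum_prod_type, one_apply, ite_mul]
  refine le_of_sq_le_sq ?_ (by positivity)
  calc ‖WithLp.toLp 2 ((1 : Matrix ι ι 𝕜) ⊗ₖ A *ᵥ x)‖ ^ 2
      = ∑ i, ‖WithLp.toLp 2 (A *ᵥ block i)‖ ^ 2 := by
        simp only [EuclideanSpace.norm_sq_eq, Fintype.sum_prod_type, hblock]
    _ ≤ ∑ i, (‖A‖ * ‖WithLp.toLp 2 (block i)‖) ^ 2 := by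
        refine Finset.sum_le_sum fun i _ => pow_le_pow_left₀ (norm_nonneg _) ?_ 2
        exact A.l2_opNorm_mulVec (WithLp.toLp 2 (block i))
    _ = (‖A‖ * ‖WithLp.toLp 2 x‖) ^ 2 := by
        simp only [mul_pow, ← Finset.mul_sum, EuclideanSpace.norm_sq_eq, Fintype.sum_prod_type,
          block]

theorem norm_inv_card_mul_trace_le [DecidableEq n] (A : Matrix n n 𝕜) :
    ‖(Fintype.card n : 𝕜)⁻¹ * A.trace‖ ≤ ‖A‖ := by
  rw [norm_mul, norm_inv, RCLike.norm_natCast]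
  rcases (Fintype.card n).eq_zero_or_pos with h | h
  · simp [h]
  · rw [inv_mul_le_iff₀ (by exact_mod_cast h)]
    exact norm_trace_le_card_mul_l2_opNorm A

theorem norm_le_l2_opNorm_of_mulVec_eq_smul {A : Matrix n n 𝕜} {v : n → 𝕜} {μ : 𝕜} (hv : v ≠ 0)
    (hA : A *ᵥ v = μ • v) : ‖μ‖ ≤ ‖A‖ := by
  have hpos : 0 < ‖WithLp.toLp 2 v‖ := norm_pos_iff.2 ((WithLp.toLp_eq_zero 2).not.2 hv)
  refine le_of_mul_le_mul_right ?_ hpos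
  calc ‖μ‖ * ‖WithLp.toLp 2 v‖ = ‖WithLp.toLp 2 (A *ᵥ v)‖ := by
        rw [hA, WithLp.toLp_smul, norm_smul]
    _ ≤ ‖A‖ * ‖WithLp.toLp 2 v‖ := A.l2_opNorm_mulVec _

end L2OpNorm

section OpNorm

variable {m n : Type*} [Fintype m] [Fintype n] [DecidableEq m] [DecidableEq n]

theorem opNorm_le_of_norm_apply_le {Φ : Matrix m m ℂ →ₗ[ℂ] Matrix n n ℂ} {C : ℝ} (hC : 0 ≤ C)
    (h : ∀ X, ‖Φ X‖ ≤ C * ‖X‖) : opNorm Φ ≤ C :=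
  ContinuousLinearMap.opNorm_le_bound _ hC h

theorem norm_apply_le_opNorm (Φ : Matrix m m ℂ →ₗ[ℂ] Matrix n n ℂ) (X : Matrix m m ℂ) :
    ‖Φ X‖ ≤ opNorm Φ * ‖X‖ :=
  (LinearMap.toContinuousLinearMap Φ).le_opNorm X

theorem opNorm_smul (c : ℂ) (Φ : Matrix m m ℂ →ₗ[ℂ] Matrix n n ℂ) :
    opNorm (c • Φ) = ‖c‖ * opNorm Φ := by
  simp only [opNorm, map_smul, norm_smul]

end OpNorm

section Amplification

variable {nA nB : ℕ}

theorem amp_sub (k : ℕ) (Φ Ψ : Matrix (Fin nB) (Fin nB) ℂ →ₗ[ℂ] Matrix (Fin nA) (Fin nA) ℂ) :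
    amp k (Φ - Ψ) = amp k Φ - amp k Ψ :=
  rfl

theorem amp_smul (k : ℕ) (c : ℂ)
    (Φ : Matrix (Fin nB) (Fin nB) ℂ →ₗ[ℂ] Matrix (Fin nA) (Fin nA) ℂ) :
    amp k (c • Φ) = c • amp k Φ :=
  rfl

theorem sum_single_mul_mul_single {α m n : Type*} [Semiring α] [Fintype m] [Fintype n]
    [DecidableEq m] [DecidableEq n] (X : Matrix n n α) (i j : n) :
    ∑ r : m, single r i (1 : α) * X * single j r (1 : α) = X i j • (1 : Matrix m m α) := by
  simp only [single_mul_mul_single, one_mul, mul_one, sum_single_eq_diagonal, smul_one_eq_diagonal]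

theorem eq_sum_mul_mul_single (Φ : Matrix (Fin nB) (Fin nB) ℂ →ₗ[ℂ] Matrix (Fin nA) (Fin nA) ℂ)
    (X : Matrix (Fin nB) (Fin nB) ℂ) :
    Φ X = ∑ p : Fin nB × Fin nB × Fin nA,
      (Φ (single p.1 p.2.1 1) * single p.2.2 p.1 (1 : ℂ)) * X * single p.2.1 p.2.2 (1 : ℂ) := by
  calc Φ X = ∑ i, ∑ j, X i j • Φ (single i j 1) := by
        conv_lhs => rw [matrix_eq_sum_single X]
        simp only [map_sum, ← map_smul, smul_single, smul_eq_mul, mul_one]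
    _ = _ := by
        simp only [Fintype.sum_prod_type]
        refine Finset.sum_congr rfl fun i _ => Finset.sum_congr rfl fun j _ => ?_
        calc X i j • Φ (single i j 1)
            = Φ (single i j 1) * (X i j • (1 : Matrix (Fin nA) (Fin nA) ℂ)) := by
              rw [Matrix.mul_smul, Matrix.mul_one]
          _ = Φ (single i j 1) * ∑ r : Fin nA, single r i (1 : ℂ) * X * single j r (1 : ℂ) := by
              rw [sum_single_mul_mul_single]
          _ = _ := by simp only [Finset.mul_sum, Matrix.mul_assoc]

theorem one_kronecker_mul_mul_one_kronecker_apply {k : ℕ} (A : Matrix (Fin nA) (Fin nB) ℂ)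
    (B : Matrix (Fin nB) (Fin nA) ℂ) (X : Matrix (Fin k × Fin nB) (Fin k × Fin nB) ℂ)
    (p q : Fin k × Fin nA) :
    ((1 : Matrix (Fin k) (Fin k) ℂ) ⊗ₖ A * X * ((1 : Matrix (Fin k) (Fin k) ℂ) ⊗ₖ B)) p q
      = (A * (Matrix.of fun a b => X (p.1, a) (q.1, b)) * B) p.2 q.2 := by
  simp [mul_apply, Fintype.sum_prod_type, one_apply, ite_mul, Finset.sum_mul]

theorem amp_eq_sum_one_kronecker_mul_mul {ι : Type*} [Fintype ι] {k : ℕ}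
    {Φ : Matrix (Fin nB) (Fin nB) ℂ →ₗ[ℂ] Matrix (Fin nA) (Fin nA) ℂ}
    {A : ι → Matrix (Fin nA) (Fin nB) ℂ} {B : ι → Matrix (Fin nB) (Fin nA) ℂ}
    (hΦ : ∀ X, Φ X = ∑ l, A l * X * B l) (X : Matrix (Fin k × Fin nB) (Fin k × Fin nB) ℂ) :
    amp k Φ X
      = ∑ l, (1 : Matrix (Fin k) (Fin k) ℂ) ⊗ₖ A l * X * ((1 : Matrix (Fin k) (Fin k) ℂ) ⊗ₖ B l) := by
  ext p q
  simp only [amp, LinearMap.coe_mk, AddHom.coe_mk, of_apply, hΦ, Matrix.sum_apply,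
    one_kronecker_mul_mul_one_kronecker_apply]

theorem opNorm_amp_le_sum {ι : Type*} [Fintype ι] (k : ℕ)
    {Φ : Matrix (Fin nB) (Fin nB) ℂ →ₗ[ℂ] Matrix (Fin nA) (Fin nA) ℂ}
    {A : ι → Matrix (Fin nA) (Fin nB) ℂ} {B : ι → Matrix (Fin nB) (Fin nA) ℂ}
    (hΦ : ∀ X, Φ X = ∑ l, A l * X * B l) : opNorm (amp k Φ) ≤ ∑ l, ‖A l‖ * ‖B l‖ := by
  refine opNorm_le_of_norm_apply_le (by positivity) fun X => ?_
  have hterm : ∀ l,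
      ‖(1 : Matrix (Fin k) (Fin k) ℂ) ⊗ₖ A l * X * ((1 : Matrix (Fin k) (Fin k) ℂ) ⊗ₖ B l)‖
        ≤ ‖A l‖ * ‖B l‖ * ‖X‖ := fun l =>
    calc _ ≤ ‖(1 : Matrix (Fin k) (Fin k) ℂ) ⊗ₖ A l‖ * ‖X‖
          * ‖(1 : Matrix (Fin k) (Fin k) ℂ) ⊗ₖ B l‖ :=
          (l2_opNorm_mul _ _).trans (by gcongr; exact l2_opNorm_mul _ _)
      _ ≤ ‖A l‖ * ‖X‖ * ‖B l‖ := by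
          gcongr <;> exact l2_opNorm_one_kronecker_le _
      _ = ‖A l‖ * ‖B l‖ * ‖X‖ := by ring
  calc ‖amp k Φ X‖
      = ‖∑ l, (1 : Matrix (Fin k) (Fin k) ℂ) ⊗ₖ A l * X
          * ((1 : Matrix (Fin k) (Fin k) ℂ) ⊗ₖ B l)‖ := by
        rw [amp_eq_sum_one_kronecker_mul_mul hΦ X]
    _ ≤ ∑ l, ‖A l‖ * ‖B l‖ * ‖X‖ := (norm_sum_le _ _).trans (Finset.sum_le_sum fun l _ => hterm l)
    _ = (∑ l, ‖A l‖ * ‖B l‖) * ‖X‖ := by rw [Finset.sum_mul]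

theorem bddAbove_opNorm_amp (Φ : Matrix (Fin nB) (Fin nB) ℂ →ₗ[ℂ] Matrix (Fin nA) (Fin nA) ℂ) :
    BddAbove (Set.range fun k => opNorm (amp k Φ)) :=
  ⟨_, Set.forall_mem_range.2 fun k => opNorm_amp_le_sum k (eq_sum_mul_mul_single Φ)⟩

theorem opNorm_amp_le_cbNorm (Φ : Matrix (Fin nB) (Fin nB) ℂ →ₗ[ℂ] Matrix (Fin nA) (Fin nA) ℂ)
    (k : ℕ) : opNorm (amp k Φ) ≤ cbNorm Φ :=
  le_ciSup (bddAbove_opNorm_amp Φ) k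

theorem norm_le_cbNorm_of_amp_mulVec_eq_smul
    {Φ : Matrix (Fin nB) (Fin nB) ℂ →ₗ[ℂ] Matrix (Fin nA) (Fin nA) ℂ} {k : ℕ}
    {F : Matrix (Fin k × Fin nB) (Fin k × Fin nB) ℂ} {v : Fin k × Fin nA → ℂ} {μ : ℂ}
    (hF : ‖F‖ ≤ 1) (hv : v ≠ 0) (h : amp k Φ F *ᵥ v = μ • v) : ‖μ‖ ≤ cbNorm Φ :=
  calc ‖μ‖ ≤ ‖amp k Φ F‖ := norm_le_l2_opNorm_of_mulVec_eq_smul hv h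
    _ ≤ opNorm (amp k Φ) * 1 :=
        (norm_apply_le_opNorm _ _).trans (mul_le_mul_of_nonneg_left hF (norm_nonneg _))
    _ ≤ cbNorm Φ := by rw [mul_one]; exact opNorm_amp_le_cbNorm Φ k

end Amplification

section TransposeDepolarizing

variable (ν : ℕ)

theorem Tp_sub_depolS (p : ℝ) : Tp ν p - depolS ν = (p : ℂ) • (transposeMap ν - depolS ν) := by
  simp only [Tp, Complex.ofReal_sub, Complex.ofReal_one]
  module

theorem transposeMap_apply (X : Matrix (Fin ν) (Fin ν) ℂ) : transposeMap ν X = Xᵀ :=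
  rfl

theorem transposeMap_sub_depolS_apply (X : Matrix (Fin ν) (Fin ν) ℂ) :
    (transposeMap ν - depolS ν) X = Xᵀ - ((ν : ℂ)⁻¹ * X.trace) • 1 := by
  simp [transposeMap_apply, depolS, depol, trace_smul]

theorem opNorm_transposeMap_sub_depolS_le : opNorm (transposeMap ν - depolS ν) ≤ 2 := by
  refine opNorm_le_of_norm_apply_le zero_le_two fun X => ?_
  rw [transposeMap_sub_depolS_apply]
  have htr : ‖(ν : ℂ)⁻¹ * X.trace‖ ≤ ‖X‖ := by
    simpa using norm_inv_card_mul_trace_le X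
  calc ‖Xᵀ - ((ν : ℂ)⁻¹ * X.trace) • (1 : Matrix (Fin ν) (Fin ν) ℂ)‖
      ≤ ‖Xᵀ‖ + ‖(ν : ℂ)⁻¹ * X.trace‖ * ‖(1 : Matrix (Fin ν) (Fin ν) ℂ)‖ :=
        (norm_sub_le _ _).trans_eq (by rw [norm_smul])
    _ ≤ ‖X‖ + ‖X‖ * 1 := by
        gcongr
        exacts [l2_opNorm_transpose_le X, l2_opNorm_one_le]
    _ = 2 * ‖X‖ := by ring

def entangledVec : Fin ν × Fin ν → ℂ := fun p => if p.1 = p.2 then 1 else 0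

theorem entangledVec_ne_zero (hν : 1 ≤ ν) : entangledVec ν ≠ 0 := fun h => by
  simpa [entangledVec] using congrFun h (⟨0, hν⟩, ⟨0, hν⟩)

theorem entangledVec_dotProduct_self : entangledVec ν ⬝ᵥ entangledVec ν = ν := by
  simp [entangledVec, dotProduct, Fintype.sum_prod_type]

theorem flipOp_eq_permMatrix :
    flipOp ν = Equiv.Perm.permMatrix ℂ (Equiv.prodComm (Fin ν) (Fin ν)) := by
  ext p q
  simp [flipOp, PEquiv.toMatrix_apply, Prod.ext_iff, and_comm, eq_comm]

theorem l2_opNorm_flipOp_le : ‖flipOp ν‖ ≤ 1 := by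
  rw [flipOp_eq_permMatrix]
  exact permMatrix_l2_opNorm_le _

theorem amp_transposeMap_flipOp :
    amp ν (transposeMap ν) (flipOp ν) = vecMulVec (entangledVec ν) (entangledVec ν) := by
  ext p q
  simp only [amp, LinearMap.coe_mk, AddHom.coe_mk, of_apply, transposeMap_apply, transpose_apply,
    flipOp, entangledVec, vecMulVec_apply]
  split_ifs <;> grind

theorem amp_depolS_flipOp : amp ν (depolS ν) (flipOp ν) = (ν : ℂ)⁻¹ • 1 := by
  ext p q
  simp only [amp, depolS, depol, trace, Algebra.smul_mul_assoc, one_mul, diag_apply,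
    Matrix.smul_apply, smul_eq_mul, LinearMap.coe_mk, AddHom.coe_mk, of_apply, one_apply, mul_ite,
    mul_one, mul_zero, flipOp, ite_and, Finset.sum_ite_eq, Finset.mem_univ, ↓reduceIte,
    Prod.ext_iff]
  split_ifs <;> grind

theorem amp_flipOp_mulVec_entangledVec :
    amp ν (transposeMap ν - depolS ν) (flipOp ν) *ᵥ entangledVec ν
      = ((ν : ℂ) - (ν : ℂ)⁻¹) • entangledVec ν := by
  rw [amp_sub, LinearMap.sub_apply, amp_transposeMap_flipOp, amp_depolS_flipOp, sub_mulVec,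
    vecMulVec_mulVec, entangledVec_dotProduct_self, op_smul_eq_smul, smul_mulVec, one_mulVec,
    sub_smul]

theorem opNorm_Tp_sub_depolS_le {p : ℝ} (hp : 0 ≤ p) : opNorm (Tp ν p - depolS ν) ≤ 2 * p := by
  rw [Tp_sub_depolS, opNorm_smul, Complex.norm_of_nonneg hp, mul_comm]
  exact mul_le_mul_of_nonneg_right (opNorm_transposeMap_sub_depolS_le ν) hp

theorem abs_mul_sub_inv_le_cbNorm_Tp_sub_depolS (hν : 1 ≤ ν) (p : ℝ) :
    |p| * ((ν : ℝ) - (ν : ℝ)⁻¹) ≤ cbNorm (Tp ν p - depolS ν) := by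
  have hν' : (ν : ℝ)⁻¹ ≤ ν := by
    have : (1 : ℝ) ≤ ν := by exact_mod_cast hν
    exact (inv_le_one_of_one_le₀ this).trans this
  have heigen : amp ν (Tp ν p - depolS ν) (flipOp ν) *ᵥ entangledVec ν
      = ((p * ((ν : ℝ) - (ν : ℝ)⁻¹) : ℝ) : ℂ) • entangledVec ν := by
    rw [Tp_sub_depolS, amp_smul, LinearMap.smul_apply, smul_mulVec,
      amp_flipOp_mulVec_entangledVec, smul_smul]
    push_cast
    rfl
  calc |p| * ((ν : ℝ) - (ν : ℝ)⁻¹) = ‖((p * ((ν : ℝ) - (ν : ℝ)⁻¹) : ℝ) : ℂ)‖ := by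
        rw [Complex.norm_real, Real.norm_eq_abs, abs_mul, abs_of_nonneg (sub_nonneg.2 hν')]
    _ ≤ cbNorm (Tp ν p - depolS ν) :=
        norm_le_cbNorm_of_amp_mulVec_eq_smul (l2_opNorm_flipOp_le ν) (entangledVec_ne_zero ν hν)
          heigen

end TransposeDepolarizing

theorem norm_cbNorm_separation {ν : ℕ} (hν : 1 ≤ ν) :
    opNorm (Tp ν (1 / ((ν : ℝ) + 1)) - depolS ν) ≤ 2 / ((ν : ℝ) + 1) ∧
      ((ν : ℝ) - 1) / ((ν : ℝ) + 1) ≤ cbNorm (Tp ν (1 / ((ν : ℝ) + 1)) - depolS ν) := by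
  have hν' : (1 : ℝ) ≤ ν := by exact_mod_cast hν
  refine ⟨(opNorm_Tp_sub_depolS_le ν (by positivity)).trans_eq (by ring),
    le_trans ?_ (abs_mul_sub_inv_le_cbNorm_Tp_sub_depolS ν hν _)⟩
  rw [abs_of_pos (by positivity)]
  field_simp
  nlinarith

end QI
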